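/- For every h ∈ C²[a,b], |B(h)| ≤ (3(b-a)²/32) ‖h''‖_∞, where B is the Bullen functional. -/

import Mathlib

/-!
Write `m = (a + b) / 2`. The Bullen functional is `2 / (b - a)` times the sum of the errors of the
trapezoidal rule on `[a, m]` and on `[m, b]`. On `[c, d]` that error is
`(1/2) ∫ (x - c) (d - x) h''(x) dx` (Peano kernel), so it is at most `(d - c)³ / 12 · ‖h''‖`.
Adding the two halves gives `|B(h)| ≤ (b - a)² / 24 · ‖h''‖`, which is stronger than the claimed
bound `3 (b - a)² / 32 · ‖h''‖`.
-/

open Set intervalIntegral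

noncomputable def supOn (a b : ℝ) (f : ℝ → ℝ) : ℝ := ⨆ x : Set.Icc a b, |f x|

def IsC2On (a b : ℝ) (g g' g'' : ℝ → ℝ) : Prop :=
  (∀ x ∈ Set.Icc a b, HasDerivWithinAt g (g' x) (Set.Icc a b) x) ∧
  (∀ x ∈ Set.Icc a b, HasDerivWithinAt g' (g'' x) (Set.Icc a b) x) ∧
  ContinuousOn g'' (Set.Icc a b)

noncomputable def KF (a b t : ℝ) (f : ℝ → ℝ) : ℝ :=
  sInf {v : ℝ | ∃ g g' g'', IsC2On a b g g' g'' ∧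
    v = supOn a b (fun x => f x - g x) + t * supOn a b g''}

noncomputable def bullen (a b : ℝ) (f : ℝ → ℝ) : ℝ :=
  (f a + f b) / 2 + f ((a + b) / 2) - (2 / (b - a)) * ∫ x in a..b, f x

noncomputable def bullenC (a b : ℝ) (n : ℕ) (x : ℕ → ℝ) (f : ℝ → ℝ) : ℝ :=
  (1 / (b - a)) * ∑ i ∈ Finset.range n, (x (i+1) - x i) *
    ((f (x i) + f (x (i+1))) / 2 + f ((x i + x (i+1)) / 2)
      - (2 / (x (i+1) - x i)) * ∫ t in (x i)..(x (i+1)), f t)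

noncomputable def omega1 (a b : ℝ) (f : ℝ → ℝ) (h : ℝ) : ℝ :=
  sSup {v : ℝ | ∃ x ∈ Set.Icc a b, ∃ y ∈ Set.Icc a b, |x - y| ≤ h ∧ v = |f x - f y|}

noncomputable def omega2 (a b : ℝ) (f : ℝ → ℝ) (h : ℝ) : ℝ :=
  sSup {v : ℝ | ∃ x t : ℝ, 0 ≤ t ∧ t ≤ h ∧ x - t ∈ Set.Icc a b ∧ x + t ∈ Set.Icc a b ∧
    v = |f (x + t) - 2 * f x + f (x - t)|}

lemma abs_le_supOn {a b : ℝ} {f : ℝ → ℝ} (hf : ContinuousOn f (Icc a b)) {x : ℝ}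
    (hx : x ∈ Icc a b) : |f x| ≤ supOn a b f := by
  have hbdd : BddAbove (range fun y : Icc a b => |f y|) := by
    simpa only [image_eq_range] using (isCompact_Icc.image_of_continuousOn hf.abs).bddAbove
  exact le_ciSup hbdd ⟨x, hx⟩

namespace IsC2On

variable {a b c d : ℝ} {g g' g'' : ℝ → ℝ}

lemma mono (hg : IsC2On a b g g' g'') (hc : a ≤ c) (hd : d ≤ b) : IsC2On c d g g' g'' := by
  have hsub : Icc c d ⊆ Icc a b := Icc_subset_Icc hc hd
  obtain ⟨h1, h2, h3⟩ := hg
  exact ⟨fun x hx => (h1 x (hsub hx)).mono hsub, fun x hx => (h2 x (hsub hx)).mono hsub,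
    h3.mono hsub⟩

lemma continuousOn (hg : IsC2On a b g g' g'') : ContinuousOn g (Icc a b) :=
  fun x hx => (hg.1 x hx).continuousWithinAt

end IsC2On

noncomputable def trapezoidError (c d : ℝ) (f : ℝ → ℝ) : ℝ :=
  (d - c) * (f c + f d) / 2 - ∫ x in c..d, f x

lemma bullen_eq_trapezoidError {a b : ℝ} (hab : a < b) {f : ℝ → ℝ}
    (hf : ContinuousOn f (Icc a b)) :
    bullen a b f = 2 / (b - a) *
      (trapezoidError a ((a + b) / 2) f + trapezoidError ((a + b) / 2) b f) := by
  have hm : (a + b) / 2 ∈ uIcc a b := by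
    rw [uIcc_of_lt hab]
    exact ⟨(left_lt_add_div_two.2 hab).le, (add_div_two_lt_right.2 hab).le⟩
  have hint := (hf.mono (uIcc_of_lt hab).le).intervalIntegrable (μ := MeasureTheory.volume)
  rw [bullen, trapezoidError, trapezoidError,
    ← integral_add_adjacent_intervals (hint.mono_set (uIcc_subset_uIcc_left hm))
      (hint.mono_set (uIcc_subset_uIcc_right hm))]
  field_simp [(sub_pos.2 hab).ne']
  ring

lemma integral_mul_sub_mul_sub (c d : ℝ) : ∫ x in c..d, (x - c) * (d - x) = (d - c) ^ 3 / 6 := by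
  have hexpand : (fun x : ℝ => (x - c) * (d - x)) = fun x => (c + d) * x - x ^ 2 - c * d := by
    ext; ring
  rw [hexpand, integral_sub, integral_sub, integral_const_mul, integral_pow, integral_id,
    integral_const]
  · simp only [smul_eq_mul]; ring
  all_goals exact Continuous.intervalIntegrable (by fun_prop) _ _

lemma IsC2On.trapezoidError_eq {c d : ℝ} (hcd : c ≤ d) {g g' g'' : ℝ → ℝ}
    (hg : IsC2On c d g g' g'') :
    trapezoidError c d g = (1 / 2) * ∫ x in c..d, (x - c) * (d - x) * g'' x := by
  -- `G` is the antiderivative of `(x - c) * (d - x) * g'' x + 2 * g x` obtained by integrating by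
  -- parts twice; the kernel vanishes at `c` and `d`, so `G d - G c = (d - c) * (g c + g d)`.
  set G : ℝ → ℝ := fun x => (x - c) * (d - x) * g' x - (c + d - 2 * x) * g x
  have hG : ∀ x ∈ Icc c d,
      HasDerivWithinAt G ((x - c) * (d - x) * g'' x + 2 * g x) (Icc c d) x := by
    intro x hx
    have hK : HasDerivAt (fun x => (x - c) * (d - x)) (c + d - 2 * x) x :=
      (((hasDerivAt_id' x).sub_const c).mul ((hasDerivAt_id' x).const_sub d)).congr_deriv
        (by ring)
    have hL : HasDerivAt (fun x => c + d - 2 * x) (-2) x :=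
      (((hasDerivAt_id' x).const_mul 2).const_sub (c + d)).congr_deriv (by ring)
    exact ((hK.hasDerivWithinAt.mul (hg.2.1 x hx)).sub
      (hL.hasDerivWithinAt.mul (hg.1 x hx))).congr_deriv (by ring)
  have hKint :
      IntervalIntegrable (fun x => (x - c) * (d - x) * g'' x) MeasureTheory.volume c d :=
    ((by fun_prop : Continuous fun x : ℝ => (x - c) * (d - x)).continuousOn.mul
      (hg.2.2.mono (uIcc_of_le hcd).le)).intervalIntegrable
  have hint : IntervalIntegrable g MeasureTheory.volume c d :=
    (hg.continuousOn.mono (uIcc_of_le hcd).le).intervalIntegrable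
  have hFTC : ∫ x in c..d, ((x - c) * (d - x) * g'' x + 2 * g x) = G d - G c :=
    integral_eq_sub_of_hasDerivAt_of_le hcd (fun x hx => (hG x hx).continuousWithinAt)
      (fun x hx => (hG x (Ioo_subset_Icc_self hx)).hasDerivAt (Icc_mem_nhds hx.1 hx.2))
      (hKint.add (hint.const_mul 2))
  rw [integral_add hKint (hint.const_mul 2), integral_const_mul] at hFTC
  rw [trapezoidError]
  simp only [G] at hFTC
  linear_combination (-1 / 2) * hFTC

lemma abs_integral_mul_sub_mul_sub_mul_le {c d M : ℝ} (hcd : c ≤ d) {f : ℝ → ℝ}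
    (hf : ∀ x ∈ Icc c d, |f x| ≤ M) :
    |∫ x in c..d, (x - c) * (d - x) * f x| ≤ (d - c) ^ 3 / 6 * M := by
  rw [← Real.norm_eq_abs, mul_comm, ← integral_mul_sub_mul_sub, ← integral_const_mul]
  refine norm_integral_le_of_norm_le hcd (Filter.Eventually.of_forall fun x hx => ?_)
    ((by fun_prop : Continuous fun x : ℝ => M * ((x - c) * (d - x))).intervalIntegrable _ _)
  have hK : 0 ≤ (x - c) * (d - x) := mul_nonneg (by linarith [hx.1]) (by linarith [hx.2])
  rw [Real.norm_eq_abs, abs_mul, abs_of_nonneg hK, mul_comm M]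
  exact mul_le_mul_of_nonneg_left (hf x (Ioc_subset_Icc_self hx)) hK

lemma abs_trapezoidError_le {c d M : ℝ} (hcd : c ≤ d) {g g' g'' : ℝ → ℝ}
    (hg : IsC2On c d g g' g'') (hM : ∀ x ∈ Icc c d, |g'' x| ≤ M) :
    |trapezoidError c d g| ≤ (d - c) ^ 3 / 12 * M := by
  rw [hg.trapezoidError_eq hcd, abs_mul, abs_of_pos one_half_pos]
  linarith [abs_integral_mul_sub_mul_sub_mul_le hcd hM]

theorem abs_bullen_le {a b M : ℝ} (hab : a < b) {f f' f'' : ℝ → ℝ} (hf : IsC2On a b f f' f'')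
    (hM : ∀ x ∈ Icc a b, |f'' x| ≤ M) : |bullen a b f| ≤ (b - a) ^ 2 / 24 * M := by
  set m := (a + b) / 2
  have ham : a ≤ m := (left_lt_add_div_two.2 hab).le
  have hmb : m ≤ b := (add_div_two_lt_right.2 hab).le
  have hleft := abs_trapezoidError_le ham (hf.mono le_rfl hmb)
    fun x hx => hM x (Icc_subset_Icc le_rfl hmb hx)
  have hright := abs_trapezoidError_le hmb (hf.mono ham le_rfl)
    fun x hx => hM x (Icc_subset_Icc ham le_rfl hx)
  have hba : 0 < b - a := sub_pos.2 hab
  rw [bullen_eq_trapezoidError hab hf.continuousOn, abs_mul, abs_of_pos (by positivity)]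
  calc 2 / (b - a) * |trapezoidError a m f + trapezoidError m b f|
      ≤ 2 / (b - a) * ((m - a) ^ 3 / 12 * M + (b - m) ^ 3 / 12 * M) := by
        gcongr
        exact (abs_add_le _ _).trans (add_le_add hleft hright)
    _ = (b - a) ^ 2 / 24 * M := by
        simp only [m]; field_simp; ring

theorem stmt19 (a b : ℝ) (hab : a < b) (h h' h'' : ℝ → ℝ)
    (hh : IsC2On a b h h' h'') :
    |bullen a b h| ≤ (3 * (b - a) ^ 2 / 32) * supOn a b h'' := by
  have hM : ∀ x ∈ Icc a b, |h'' x| ≤ supOn a b h'' := fun x hx => abs_le_supOn hh.2.2 hx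
  have hM0 : 0 ≤ supOn a b h'' := (abs_nonneg _).trans (hM a (left_mem_Icc.2 hab.le))
  calc |bullen a b h| ≤ (b - a) ^ 2 / 24 * supOn a b h'' := abs_bullen_le hab hh hM
    _ ≤ 3 * (b - a) ^ 2 / 32 * supOn a b h'' :=
      mul_le_mul_of_nonneg_right (by linarith [sq_nonneg (b - a)]) hM0
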